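/- Let n and m be positive integers, let A be an invertible n×n real matrix, let D be an n×n real matrix, let b ∈ ℝⁿ, and let ε be a real number with m · |ε| · ‖A⁻¹ * D‖ < 1, where ‖·‖ is the operator norm induced by the Euclidean vector norm. For each integer α with 1 ≤ α ≤ m define x̂_α := (1/2)((A + (α·ε) • D)⁻¹ b + (A − (α·ε) • D)⁻¹ b), let Γ_m be the m×m matrix with entries (Γ_m)_{α,j} = α^{2j} (α = 1,…,m; j = 0,…,m−1), and let β := (Γ_mᵀ)⁻¹ e₁ with e₁ = (1,0,…,0)ᵀ. Then the approximation x̂* := Σ_{α=1}^m β_α x̂_α satisfies ‖x̂* − A⁻¹ b‖ ≤ (Σ_{α=1}^m |β_α|) · (m |ε| ‖A⁻¹ * D‖)^{2m} / (1 − (m |ε| ‖A⁻¹ * D‖)²) · ‖A⁻¹‖ · ‖b‖. -/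

import Mathlib

/-!
With `X = A⁻¹ * D` we have `A ± t • D = A * (1 ± t • X)`, and averaging the two inverses
cancels the odd powers: `x̂_α = (1 - α² • (ε • X)²)⁻¹ * A⁻¹ b`. Expanding
`(1 - y)⁻¹ = ∑_{k<m} yᵏ + yᵐ (1 - y)⁻¹`, the equation `Γ_mᵀ β = e₁` says exactly that
`∑_α β_α α^{2k} = δ_{k0}` for `k < m`, so the polynomial parts add up to `1` and
`x̂* - A⁻¹ b = ∑_α β_α (α² • (ε • X)²)ᵐ (1 - α² • (ε • X)²)⁻¹ A⁻¹ b`. Each term is bounded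
through `‖α² • (ε • X)²‖ ≤ (m |ε| ‖X‖)² < 1`.
-/

open Matrix
open scoped Matrix.Norms.L2Operator

/-- Matrix-vector product, with the vector living in Euclidean space (so that vector
norms are the Euclidean ones). -/
noncomputable def mulVecE {n : ℕ} (M : Matrix (Fin n) (Fin n) ℝ)
    (v : EuclideanSpace ℝ (Fin n)) : EuclideanSpace ℝ (Fin n) :=
  (WithLp.equiv 2 (Fin n → ℝ)).symm (M.mulVec ((WithLp.equiv 2 (Fin n → ℝ)) v))

/-- The averaged perturbation solution
`x̂_α = (1/2)((A + (α ε) • D)⁻¹ b + (A - (α ε) • D)⁻¹ b)`. -/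
noncomputable def xhat {n : ℕ} (A D : Matrix (Fin n) (Fin n) ℝ)
    (b : EuclideanSpace ℝ (Fin n)) (ε α : ℝ) : EuclideanSpace ℝ (Fin n) :=
  (1 / 2 : ℝ) • (mulVecE (A + (α * ε) • D)⁻¹ b + mulVecE (A - (α * ε) • D)⁻¹ b)

open Finset
open scoped Ring

section NormedRing

variable {R : Type*} [NormedRing R]

theorem CStarRing.norm_one_le [StarRing R] [CStarRing R] : ‖(1 : R)‖ ≤ 1 := by
  nontriviality R
  exact CStarRing.norm_one.le

theorem norm_pow_mul_le (x y : R) (m : ℕ) : ‖x ^ m * y‖ ≤ ‖x‖ ^ m * ‖y‖ := by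
  rcases m.eq_zero_or_pos with rfl | hm
  · simp
  · exact (norm_mul_le _ _).trans (by gcongr; exact norm_pow_le' x hm)

variable [HasSummableGeomSeries R]

theorem isUnit_one_add_of_norm_lt_one {x : R} (h : ‖x‖ < 1) : IsUnit (1 + x) := by
  simpa using isUnit_one_sub_of_norm_lt_one (x := -x) (by rwa [norm_neg])

/- Not `NormOneClass`: the L2 operator norm of the `0 × 0` identity matrix is `0`. -/
theorem norm_ringInverse_one_sub_le (h1 : ‖(1 : R)‖ ≤ 1) {x : R} (hx : ‖x‖ < 1) :
    ‖(1 - x)⁻¹ʳ‖ ≤ (1 - ‖x‖)⁻¹ := by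
  rw [← geom_series_eq_inverse x hx]
  linarith [tsum_geometric_le_of_norm_lt_one x hx]

theorem norm_sum_smul_pow_mul_ringInverse_one_sub_le [NormedSpace ℝ R] (h1 : ‖(1 : R)‖ ≤ 1)
    {ι : Type*} (s : Finset ι) (β : ι → ℝ) (y : ι → R) {ρ : ℝ} (hy : ∀ i ∈ s, ‖y i‖ ≤ ρ)
    (hρ : ρ < 1) (m : ℕ) :
    ‖∑ i ∈ s, β i • (y i ^ m * (1 - y i)⁻¹ʳ)‖ ≤ (∑ i ∈ s, |β i|) * (ρ ^ m / (1 - ρ)) := by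
  rw [sum_mul]
  refine (norm_sum_le _ _).trans (sum_le_sum fun i hi => ?_)
  have hyi : ‖y i‖ < 1 := (hy i hi).trans_lt hρ
  rw [norm_smul, Real.norm_eq_abs, div_eq_mul_inv]
  gcongr
  calc ‖y i ^ m * (1 - y i)⁻¹ʳ‖ ≤ ‖y i‖ ^ m * (1 - ‖y i‖)⁻¹ :=
        (norm_pow_mul_le _ _ m).trans (by gcongr; exact norm_ringInverse_one_sub_le h1 hyi)
    _ ≤ ρ ^ m * (1 - ρ)⁻¹ := by
        have hρ0 : 0 ≤ ρ := (norm_nonneg _).trans (hy i hi)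
        gcongr <;> linarith [hy i hi]

end NormedRing

theorem ringInverse_one_sub_sq {R : Type*} [Ring R] [Algebra ℝ R] {x : R}
    (hadd : IsUnit (1 + x)) (hsub : IsUnit (1 - x)) :
    (1 - x ^ 2)⁻¹ʳ = (1 / 2 : ℝ) • ((1 + x)⁻¹ʳ + (1 - x)⁻¹ʳ) := by
  have hfactor : 1 - x ^ 2 = (1 + x) * (1 - x) := by noncomm_ring
  have hsum : (1 + x)⁻¹ʳ + (1 - x)⁻¹ʳ = (2 : ℝ) • ((1 - x)⁻¹ʳ * (1 + x)⁻¹ʳ) :=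
    calc (1 + x)⁻¹ʳ + (1 - x)⁻¹ʳ
        = (1 - x)⁻¹ʳ * (1 - x) * (1 + x)⁻¹ʳ + (1 - x)⁻¹ʳ * (1 + x) * (1 + x)⁻¹ʳ := by
          rw [Ring.inverse_mul_cancel _ hsub, Ring.mul_inverse_cancel_right _ _ hadd, one_mul]
      _ = (2 : ℝ) • ((1 - x)⁻¹ʳ * (1 + x)⁻¹ʳ) := by
          rw [two_smul]
          noncomm_ring
  rw [hfactor, Ring.inverse_mul (.inl hadd), hsum, smul_smul]
  norm_num

/- Richardson extrapolation: the moment conditions collapse the truncated Neumann series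
`∑_{k<m} (c i • z)ᵏ` to `1`, leaving only their tails. -/
theorem sum_smul_ringInverse_one_sub_smul {R : Type*} [NormedRing R] [NormedAlgebra ℝ R]
    [CompleteSpace R] {ι : Type*} (s : Finset ι) (β c : ι → ℝ) (z : R) {m : ℕ} (hm : 0 < m)
    (hmoments : ∀ k < m, ∑ i ∈ s, β i * c i ^ k = if k = 0 then 1 else 0)
    (hsmall : ∀ i ∈ s, ‖c i • z‖ < 1) :
    ∑ i ∈ s, β i • (1 - c i • z)⁻¹ʳ
      = 1 + ∑ i ∈ s, β i • ((c i • z) ^ m * (1 - c i • z)⁻¹ʳ) := by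
  have hpolynomial : ∑ i ∈ s, β i • ∑ k ∈ range m, (c i • z) ^ k = 1 := by
    simp only [smul_pow, smul_sum, smul_smul]
    rw [sum_comm]
    simp only [← sum_smul]
    rw [sum_congr rfl fun k hk => by rw [hmoments k (mem_range.1 hk)]]
    simp [hm]
  calc ∑ i ∈ s, β i • (1 - c i • z)⁻¹ʳ
      = ∑ i ∈ s, β i • (∑ k ∈ range m, (c i • z) ^ k + (c i • z) ^ m * (1 - c i • z)⁻¹ʳ) :=
        sum_congr rfl fun i hi => by rw [← NormedRing.inverse_one_sub_nth_order' m (hsmall i hi)]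
    _ = 1 + ∑ i ∈ s, β i • ((c i • z) ^ m * (1 - c i • z)⁻¹ʳ) := by
        rw [← hpolynomial, ← sum_add_distrib]
        simp only [smul_add]

theorem sum_inv_transpose_vandermonde_mulVec_mul_pow {m : ℕ} {v : Fin m → ℝ}
    (hv : Function.Injective v) (e : Fin m → ℝ) (j : Fin m) :
    ∑ i, ((vandermonde v)ᵀ⁻¹ *ᵥ e) i * v i ^ (j : ℕ) = e j := by
  have hdet : IsUnit (vandermonde v)ᵀ.det := by
    rw [det_transpose, isUnit_iff_ne_zero, det_vandermonde_ne_zero_iff]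
    exact hv
  have h := congrFun (congrArg (· *ᵥ e) (mul_nonsing_inv _ hdet)) j
  simp only [← mulVec_mulVec, one_mulVec] at h
  simpa [mulVec, dotProduct, mul_comm] using h

theorem sum_mul_sq_succ_pow_eq_ite_of_eq_inv_transpose_mulVec {m : ℕ} {β : Fin m → ℝ}
    (hβ : β = ((Matrix.of fun α j : Fin m => (((α : ℕ) + 1 : ℝ)) ^ (2 * (j : ℕ)))ᵀ)⁻¹.mulVec
        (fun i : Fin m => if (i : ℕ) = 0 then (1 : ℝ) else 0)) :
    ∀ k < m, ∑ α, β α * ((((α : ℕ) : ℝ) + 1) ^ 2) ^ k = if k = 0 then 1 else 0 := by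
  intro k hk
  have hinj : Function.Injective fun α : Fin m => (((α : ℕ) : ℝ) + 1) ^ 2 := fun a b h =>
    Fin.ext <| by
      have := (pow_left_inj₀ (by positivity) (by positivity) two_ne_zero).1 h
      exact_mod_cast add_right_cancel this
  have hΓ : (Matrix.of fun α j : Fin m => (((α : ℕ) + 1 : ℝ)) ^ (2 * (j : ℕ)))
      = vandermonde fun α => (((α : ℕ) : ℝ) + 1) ^ 2 := by
    ext
    simp [vandermonde, pow_mul]
  simpa [hβ, hΓ] using sum_inv_transpose_vandermonde_mulVec_mul_pow hinj _ ⟨k, hk⟩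

theorem norm_mul_smul_le {E : Type*} [SeminormedAddCommGroup E] [NormedSpace ℝ E] {a M : ℝ}
    (ha : 0 ≤ a) (haM : a ≤ M) (ε : ℝ) (x : E) : ‖(a * ε) • x‖ ≤ M * |ε| * ‖x‖ := by
  rw [norm_smul, norm_mul, Real.norm_eq_abs, Real.norm_eq_abs, abs_of_nonneg ha, mul_assoc,
    mul_assoc]
  exact mul_le_mul_of_nonneg_right haM (by positivity)

theorem norm_sq_smul_smul_sq_le {R : Type*} [NormedRing R] [NormedAlgebra ℝ R] {a M : ℝ}
    (ha : 0 ≤ a) (haM : a ≤ M) (ε : ℝ) (x : R) : ‖a ^ 2 • (ε • x) ^ 2‖ ≤ (M * |ε| * ‖x‖) ^ 2 :=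
  calc ‖a ^ 2 • (ε • x) ^ 2‖ = ‖((a * ε) • x) ^ 2‖ := by rw [smul_pow, smul_pow, mul_pow, mul_smul]
    _ ≤ (M * |ε| * ‖x‖) ^ 2 :=
        (norm_pow_le' _ two_pos).trans (by gcongr; exact norm_mul_smul_le ha haM ε x)

section EuclideanMatrix

variable {n : ℕ}

theorem mulVecE_eq_toEuclideanCLM (M : Matrix (Fin n) (Fin n) ℝ) (v : EuclideanSpace ℝ (Fin n)) :
    mulVecE M v = toEuclideanCLM (𝕜 := ℝ) M v :=
  rfl

theorem norm_mulVecE_le (M : Matrix (Fin n) (Fin n) ℝ) (v : EuclideanSpace ℝ (Fin n)) :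
    ‖mulVecE M v‖ ≤ ‖M‖ * ‖v‖ :=
  (toEuclideanCLM (𝕜 := ℝ) M).le_opNorm v

theorem xhat_eq_ringInverse_mul_inv (A D : Matrix (Fin n) (Fin n) ℝ) (hA : IsUnit A)
    (b : EuclideanSpace ℝ (Fin n)) (ε a : ℝ) (h : ‖(a * ε) • (A⁻¹ * D)‖ < 1) :
    xhat A D b ε a = mulVecE ((1 - a ^ 2 • (ε • (A⁻¹ * D)) ^ 2)⁻¹ʳ * A⁻¹) b := by
  have hfactor (t : ℝ) : A + t • D = A * (1 + t • (A⁻¹ * D)) := by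
    rw [mul_add, mul_one, mul_smul_comm, ← Matrix.mul_assoc,
      mul_nonsing_inv _ ((isUnit_iff_isUnit_det A).mp hA), one_mul]
  have hsq : a ^ 2 • (ε • (A⁻¹ * D)) ^ 2 = ((a * ε) • (A⁻¹ * D)) ^ 2 := by
    rw [smul_pow, smul_pow, mul_pow, mul_smul]
  rw [hsq, ringInverse_one_sub_sq (isUnit_one_add_of_norm_lt_one h)
    (isUnit_one_sub_of_norm_lt_one h), ← nonsing_inv_eq_ringInverse, ← nonsing_inv_eq_ringInverse,
    xhat, sub_eq_add_neg, ← neg_smul, hfactor, hfactor, Matrix.mul_inv_rev, Matrix.mul_inv_rev,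
    neg_smul, ← sub_eq_add_neg]
  simp only [mulVecE_eq_toEuclideanCLM, smul_mul_assoc, add_mul, map_add, map_smul,
    _root_.add_apply, _root_.smul_apply]

end EuclideanMatrix

theorem optimal_approximation_error_bound_general (n m : ℕ) (hm : 0 < m)
    (A D : Matrix (Fin n) (Fin n) ℝ) (hA : IsUnit A) (b : EuclideanSpace ℝ (Fin n))
    (ε : ℝ) (hε : (m : ℝ) * |ε| * ‖A⁻¹ * D‖ < 1) (β : Fin m → ℝ)
    (hβ : β = ((Matrix.of fun α j : Fin m => (((α : ℕ) + 1 : ℝ)) ^ (2 * (j : ℕ)))ᵀ)⁻¹.mulVec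
        (fun i : Fin m => if (i : ℕ) = 0 then (1 : ℝ) else 0)) :
    ‖(∑ α : Fin m, β α • xhat A D b ε ((α : ℕ) + 1)) - mulVecE A⁻¹ b‖
      ≤ (∑ α : Fin m, |β α|) * ((m : ℝ) * |ε| * ‖A⁻¹ * D‖) ^ (2 * m)
          / (1 - ((m : ℝ) * |ε| * ‖A⁻¹ * D‖) ^ 2) * ‖A⁻¹‖ * ‖b‖ := by
  set r := (m : ℝ) * |ε| * ‖A⁻¹ * D‖
  set c : Fin m → ℝ := fun α => (((α : ℕ) : ℝ) + 1) ^ 2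
  set z := (ε • (A⁻¹ * D)) ^ 2
  have hnode (α : Fin m) : ‖((((α : ℕ) : ℝ) + 1) * ε) • (A⁻¹ * D)‖ ≤ r :=
    norm_mul_smul_le (by positivity) (by exact_mod_cast α.isLt) _ _
  have hcz (α : Fin m) : ‖c α • z‖ ≤ r ^ 2 :=
    norm_sq_smul_smul_sq_le (by positivity) (by exact_mod_cast α.isLt) _ _
  have hr2 : r ^ 2 < 1 := pow_lt_one₀ (by positivity) hε two_ne_zero
  have hsum := sum_smul_ringInverse_one_sub_smul univ β c z hm
    (sum_mul_sq_succ_pow_eq_ite_of_eq_inv_transpose_mulVec hβ) fun α _ => (hcz α).trans_lt hr2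
  have hxhat (α : Fin m) : xhat A D b ε ((α : ℕ) + 1) = mulVecE ((1 - c α • z)⁻¹ʳ * A⁻¹) b :=
    xhat_eq_ringInverse_mul_inv A D hA b ε _ ((hnode α).trans_lt hε)
  have herror : (∑ α, β α • xhat A D b ε ((α : ℕ) + 1)) - mulVecE A⁻¹ b
      = mulVecE ((∑ α, β α • ((c α • z) ^ m * (1 - c α • z)⁻¹ʳ)) * A⁻¹) b := by
    rw [← add_sub_cancel_left (1 : Matrix (Fin n) (Fin n) ℝ) (∑ α, _), ← hsum, sub_mul, one_mul]
    simp only [hxhat, mulVecE_eq_toEuclideanCLM, sum_mul, smul_mul_assoc, map_sum, map_smul,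
      map_sub, _root_.sub_apply, _root_.sum_apply, _root_.smul_apply]
  rw [herror]
  calc _ ≤ ‖∑ α, β α • ((c α • z) ^ m * (1 - c α • z)⁻¹ʳ)‖ * ‖A⁻¹‖ * ‖b‖ :=
        (norm_mulVecE_le _ _).trans (by gcongr; exact norm_mul_le _ _)
    _ ≤ (∑ α, |β α|) * ((r ^ 2) ^ m / (1 - r ^ 2)) * ‖A⁻¹‖ * ‖b‖ := by
        gcongr
        exact norm_sum_smul_pow_mul_ringInverse_one_sub_le CStarRing.norm_one_le univ β _
          (fun α _ => hcz α) hr2 m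
    _ = _ := by rw [pow_mul, mul_div_assoc]

/-- Explicit error bound for the optimal approximation `x̂* = ∑_α β_α x̂_α` with
`β = (Γ_mᵀ)⁻¹ e₁`:
`‖x̂* - A⁻¹ b‖ ≤ (∑_α |β_α|) (m |ε| ‖A⁻¹ D‖)^(2m) / (1 - (m |ε| ‖A⁻¹ D‖)²) ‖A⁻¹‖ ‖b‖`. -/
theorem optimal_approximation_error_bound (n m : ℕ) (hn : 0 < n) (hm : 0 < m)
    (A D : Matrix (Fin n) (Fin n) ℝ) (hA : IsUnit A) (b : EuclideanSpace ℝ (Fin n))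
    (ε : ℝ) (hε : (m : ℝ) * |ε| * ‖A⁻¹ * D‖ < 1) (β : Fin m → ℝ)
    (hβ : β = ((Matrix.of fun α j : Fin m => (((α : ℕ) + 1 : ℝ)) ^ (2 * (j : ℕ)))ᵀ)⁻¹.mulVec
        (fun i : Fin m => if (i : ℕ) = 0 then (1 : ℝ) else 0)) :
    ‖(∑ α : Fin m, β α • xhat A D b ε ((α : ℕ) + 1)) - mulVecE A⁻¹ b‖
      ≤ (∑ α : Fin m, |β α|) * ((m : ℝ) * |ε| * ‖A⁻¹ * D‖) ^ (2 * m)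
          / (1 - ((m : ℝ) * |ε| * ‖A⁻¹ * D‖) ^ 2) * ‖A⁻¹‖ * ‖b‖ :=
  optimal_approximation_error_bound_general n m hm A D hA b ε hε β hβ
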